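/- arXiv:1612.04859 — 5 statements merged into one kernel-verified Lean document; each statement's English description precedes it below -/
import Mathlib

section
/- Nonlinear self-adjointness of the KdV equation: let u : ℝ × ℝ → ℝ be any smooth function of (t,x), let A₁, A₂, A₃ be real constants, and define v(t,x) = A₁ + A₂·u(t,x) + A₃·( x + t·u(t,x) ). Then at every point one has the identity −∂_t v + u·∂_x v + ∂³_x v = −(A₂ + A₃·t)·( u_t − u·u_x − u_{xxx} ). In particular, if u solves the KdV equation u_t − u_{xxx} − u·u_x = 0 everywhere, then v solves the adjoint equation −v_t + u·v_x + v_{xxx} = 0 everywhere. -/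
/-- Partial derivative with respect to the first (time) variable. -/
noncomputable def pt (f : ℝ × ℝ → ℝ) : ℝ × ℝ → ℝ :=
  fun q => deriv (fun s => f (s, q.2)) q.1

/-- Partial derivative with respect to the second (space) variable. -/
noncomputable def px (f : ℝ × ℝ → ℝ) : ℝ × ℝ → ℝ :=
  fun q => deriv (fun s => f (q.1, s)) q.2

lemma hasDerivAt_px {f : ℝ × ℝ → ℝ} (hf : ContDiff ℝ (⊤ : ℕ∞) f) (q : ℝ × ℝ) :
    HasDerivAt (fun s => f (q.1, s)) (px f q) q.2 := by
  have h : DifferentiableAt ℝ (fun s => f (q.1, s)) q.2 := by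
    have := (hf.differentiable (by simp) (q.1, q.2)).comp q.2
      (DifferentiableAt.prodMk (differentiableAt_const q.1) differentiableAt_id)
    exact this
  exact h.hasDerivAt

lemma hasDerivAt_pt {f : ℝ × ℝ → ℝ} (hf : ContDiff ℝ (⊤ : ℕ∞) f) (q : ℝ × ℝ) :
    HasDerivAt (fun s => f (s, q.2)) (pt f q) q.1 := by
  have h : DifferentiableAt ℝ (fun s => f (s, q.2)) q.1 := by
    have := (hf.differentiable (by simp) (q.1, q.2)).comp (𝕜 := ℝ) q.1
      (DifferentiableAt.prodMk (differentiableAt_id (x := q.1)) (differentiableAt_const q.2))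
    exact this
  exact h.hasDerivAt

lemma contDiff_px {f : ℝ × ℝ → ℝ} (hf : ContDiff ℝ (⊤ : ℕ∞) f) : ContDiff ℝ (⊤ : ℕ∞) (px f) := by
  have heq : px f = fun q => fderiv ℝ f q (0, 1) := by
    funext q
    have h1 : HasDerivAt (fun s : ℝ => ((q.1, s) : ℝ × ℝ)) (0, 1) q.2 :=
      HasDerivAt.prodMk (hasDerivAt_const q.2 q.1) (hasDerivAt_id q.2)
    have h2 := ((hf.differentiable (by simp) (q.1, q.2)).hasFDerivAt).comp_hasDerivAt q.2 h1
    exact h2.deriv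
  rw [heq]
  exact (ContinuousLinearMap.apply ℝ ℝ ((0 : ℝ), (1 : ℝ))).contDiff.comp
    (hf.fderiv_right (by simp))

lemma px_aux {g : ℝ × ℝ → ℝ} (hg : ContDiff ℝ (⊤ : ℕ∞) g) (B C D : ℝ) :
    px (fun q => (B + C * q.1) * g q + D) = fun q => (B + C * q.1) * px g q := by
  funext q
  have hg' := hasDerivAt_px hg q
  have h : HasDerivAt (fun s => (B + C * q.1) * g (q.1, s) + D)
      ((B + C * q.1) * px g q) q.2 := (hg'.const_mul (B + C * q.1)).add_const D
  exact h.deriv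

/-- Nonlinear self-adjointness of KdV: for any smooth `u` and constants `A₁, A₂, A₃`,
the substitution `v = A₁ + A₂*u + A₃*(x + t*u)` satisfies
`-v_t + u*v_x + v_xxx = -(A₂ + A₃*t)*(u_t - u*u_x - u_xxx)`; in particular, if `u`
solves KdV everywhere, then `v` solves the adjoint equation everywhere. -/
theorem kdv_nonlinear_self_adjoint (u : ℝ × ℝ → ℝ) (hu : ContDiff ℝ (⊤ : ℕ∞) u)
    (A₁ A₂ A₃ : ℝ)
    (v : ℝ × ℝ → ℝ)
    (hv : v = fun q => A₁ + A₂ * u q + A₃ * (q.2 + q.1 * u q)) :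
    (∀ p : ℝ × ℝ,
      -pt v p + u p * px v p + px (px (px v)) p
        = -(A₂ + A₃ * p.1) * (pt u p - u p * px u p - px (px (px u)) p))
    ∧ ((∀ p : ℝ × ℝ, pt u p - px (px (px u)) p - u p * px u p = 0) →
        ∀ p : ℝ × ℝ, -pt v p + u p * px v p + px (px (px v)) p = 0) := by
  have hux : ContDiff ℝ (⊤ : ℕ∞) (px u) := contDiff_px hu
  have huxx : ContDiff ℝ (⊤ : ℕ∞) (px (px u)) := contDiff_px hux
  -- first spatial derivative of v
  have h1 : px v = fun q => (A₂ + A₃ * q.1) * px u q + A₃ := by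
    funext q
    have hu' := hasDerivAt_px hu q
    have h : HasDerivAt (fun s => A₁ + A₂ * u (q.1, s) + A₃ * (s + q.1 * u (q.1, s)))
        (0 + A₂ * px u q + A₃ * (1 + q.1 * px u q)) q.2 :=
      ((hasDerivAt_const q.2 A₁).add (hu'.const_mul A₂)).add
        (((hasDerivAt_id q.2).add (hu'.const_mul q.1)).const_mul A₃)
    have := h.deriv
    rw [hv]
    simp only [px] at this ⊢
    rw [this]; ring
  have h1' : px v = fun q => (A₂ + A₃ * q.1) * px u q + A₃ := h1
  -- second spatial derivative
  have h2 : px (px v) = fun q => (A₂ + A₃ * q.1) * px (px u) q := by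
    rw [h1', px_aux hux]
  -- third spatial derivative
  have h3 : px (px (px v)) = fun q => (A₂ + A₃ * q.1) * px (px (px u)) q + 0 := by
    rw [h2]
    have := px_aux huxx A₂ A₃ 0
    simp only [add_zero] at this
    rw [this]
    funext q; ring
  -- time derivative of v
  have h4 : ∀ p : ℝ × ℝ, pt v p = A₂ * pt u p + A₃ * (u p + p.1 * pt u p) := by
    intro p
    have hu' := hasDerivAt_pt hu p
    have h : HasDerivAt (fun s => A₁ + A₂ * u (s, p.2) + A₃ * (p.2 + s * u (s, p.2)))
        (0 + A₂ * pt u p + A₃ * (0 + (1 * u (p.1, p.2) + p.1 * pt u p))) p.1 :=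
      ((hasDerivAt_const p.1 A₁).add (hu'.const_mul A₂)).add
        (((hasDerivAt_const p.1 p.2).add ((hasDerivAt_id p.1).mul hu')).const_mul A₃)
    have hd := h.deriv
    rw [hv]
    simp only [pt] at hd ⊢
    rw [hd]; ring
  have main : ∀ p : ℝ × ℝ,
      -pt v p + u p * px v p + px (px (px v)) p
        = -(A₂ + A₃ * p.1) * (pt u p - u p * px u p - px (px (px u)) p) := by
    intro p
    rw [h4 p, h3, h1']
    simp only []
    ring
  refine ⟨main, fun hkdv p => ?_⟩
  rw [main p]
  linear_combination (-(A₂ + A₃ * p.1)) * hkdv p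
end

section
/- For every smooth function u : ℝ × ℝ → ℝ of (t,x) (not assumed to solve any equation), the following divergence identity holds at every point: ∂_t( √(1 + u_x²) ) − ∂_x( (u²/2)·√(1 + u_x²) ) = ( u_x / √(1 + u_x²) )·( u_{tx} − u − (1/2)·u²·u_{xx} − u·u_x² ). In particular, u_x/√(1 + u_x²) is a local conservation-law multiplier for the short pulse equation. -/
/-- For every smooth `u`, the divergence identity showing that `u_x / √(1 + u_x²)` is a
multiplier for the short pulse equation holds everywhere. -/
theorem sp_multiplier_identity_sqrt (u : ℝ × ℝ → ℝ) (hu : ContDiff ℝ (⊤ : ℕ∞) u) :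
    ∀ p : ℝ × ℝ,
      pt (fun q => Real.sqrt (1 + (px u q) ^ 2)) p
        - px (fun q => (u q ^ 2 / 2) * Real.sqrt (1 + (px u q) ^ 2)) p
      = (px u p / Real.sqrt (1 + (px u p) ^ 2))
          * (pt (px u) p - u p - (1 / 2) * u p ^ 2 * px (px u) p - u p * (px u p) ^ 2) := by
  intro p
  have hud : Differentiable ℝ u := hu.differentiable (by simp)
  have ha_eq : px u = fun q => fderiv ℝ u q (0, 1) := by
    funext q
    have hL : HasDerivAt (fun s : ℝ => ((q.1, s) : ℝ × ℝ)) ((0 : ℝ), (1 : ℝ)) q.2 :=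
      HasDerivAt.prodMk (hasDerivAt_const _ _) (hasDerivAt_id _)
    have h1 : HasDerivAt (fun s => u (q.1, s)) (fderiv ℝ u (q.1, q.2) (0, 1)) q.2 :=
      (hud (q.1, q.2)).hasFDerivAt.comp_hasDerivAt q.2 hL
    have := h1.deriv
    simp only [px, this]
  have ha : ContDiff ℝ (⊤ : ℕ∞) (px u) := by
    rw [ha_eq]
    exact (ContinuousLinearMap.apply ℝ ℝ ((0 : ℝ), (1 : ℝ))).contDiff.comp
      (hu.fderiv_right (by simp))
  have had : Differentiable ℝ (px u) := ha.differentiable (by simp)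
  -- b : time section of u_x
  set a := px u with ha_def
  have hbd : DifferentiableAt ℝ (fun s => a (s, p.2)) p.1 :=
    by fun_prop
  have hb : HasDerivAt (fun s => a (s, p.2)) (pt a p) p.1 := by
    have := hbd.hasDerivAt
    simpa [pt] using this
  have hdd : DifferentiableAt ℝ (fun s => a (p.1, s)) p.2 :=
    by fun_prop
  have hd : HasDerivAt (fun s => a (p.1, s)) (px a p) p.2 := by
    have := hdd.hasDerivAt
    simpa [px] using this
  have hcd : DifferentiableAt ℝ (fun s => u (p.1, s)) p.2 :=
    by fun_prop
  have hc : HasDerivAt (fun s => u (p.1, s)) (a p) p.2 := by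
    have := hcd.hasDerivAt
    simpa [ha_def, px] using this
  set A := a p with hA
  set T := pt a p with hT
  set Xx := px a p with hX
  set U := u p with hU
  have hap : a (p.1, p.2) = A := by rw [hA]
  have hup : u (p.1, p.2) = U := by rw [hU]
  have hpos : (0 : ℝ) < 1 + A ^ 2 := by positivity
  set S := Real.sqrt (1 + A ^ 2) with hSdef
  have hS : 0 < S := Real.sqrt_pos.mpr hpos
  have hS2 : S ^ 2 = 1 + A ^ 2 := Real.sq_sqrt hpos.le
  -- time derivative of sqrt(1 + u_x^2)
  have hinner : HasDerivAt (fun s => 1 + a (s, p.2) ^ 2) (2 * A * T) p.1 := by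
    have := (hb.pow 2).const_add 1
    simpa [hap] using this
  have hsq : HasDerivAt (fun s => Real.sqrt (1 + a (s, p.2) ^ 2))
      (1 / (2 * S) * (2 * A * T)) p.1 := by
    have h := (Real.hasDerivAt_sqrt hpos.ne').comp p.1 hinner
    simpa [hap, hSdef, Function.comp_def] using h
  have e1 : pt (fun q => Real.sqrt (1 + a q ^ 2)) p = A * T / S := by
    have := hsq.deriv
    simp only [pt]
    rw [show (fun s => Real.sqrt (1 + a (s, p.2) ^ 2)) = fun s =>
      (fun q : ℝ × ℝ => Real.sqrt (1 + a q ^ 2)) (s, p.2) from rfl] at this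
    rw [this]
    field_simp
  -- space derivative of (u^2/2) * sqrt(1 + u_x^2)
  have hinner2 : HasDerivAt (fun s => 1 + a (p.1, s) ^ 2) (2 * A * Xx) p.2 := by
    have := (hd.pow 2).const_add 1
    simpa [hap] using this
  have hsq2 : HasDerivAt (fun s => Real.sqrt (1 + a (p.1, s) ^ 2))
      (1 / (2 * S) * (2 * A * Xx)) p.2 := by
    have h := (Real.hasDerivAt_sqrt hpos.ne').comp p.2 hinner2
    simpa [hap, hSdef, Function.comp_def] using h
  have hc2 : HasDerivAt (fun s => u (p.1, s) ^ 2 / 2) (2 * U * A / 2) p.2 := by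
    have := (hc.pow 2).div_const 2
    simpa [hup] using this
  have hprod : HasDerivAt (fun s => (u (p.1, s) ^ 2 / 2) * Real.sqrt (1 + a (p.1, s) ^ 2))
      ((2 * U * A / 2) * S + (U ^ 2 / 2) * (1 / (2 * S) * (2 * A * Xx))) p.2 := by
    have := hc2.fun_mul hsq2
    simpa [hup, hap, hSdef] using this
  have e2 : px (fun q => (u q ^ 2 / 2) * Real.sqrt (1 + a q ^ 2)) p
      = (2 * U * A / 2) * S + (U ^ 2 / 2) * (1 / (2 * S) * (2 * A * Xx)) := by
    have := hprod.deriv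
    simp only [px]
    exact this
  rw [e1, e2]
  field_simp
  linear_combination (-(2:ℝ) * U * A) * hS2
end

section
/- Let u : ℝ × ℝ → ℝ be a smooth function of (t,x) satisfying the short pulse equation u_{tx} − u − (1/2)·u²·u_{xx} − u·u_x² = 0 at every point of ℝ². Then the local conservation law ∂_t( √(1 + u_x²) ) − ∂_x( (u²/2)·√(1 + u_x²) ) = 0 holds at every point of ℝ². -/
lemma px_eq (f : ℝ × ℝ → ℝ) (hf : ContDiff ℝ (⊤ : ℕ∞) f) :
    px f = fun q => fderiv ℝ f q (0, 1) := by
  funext q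
  have h1 : HasDerivAt (fun s : ℝ => ((q.1, s) : ℝ × ℝ)) ((0 : ℝ), (1 : ℝ)) q.2 :=
    (hasDerivAt_const _ _).prodMk (hasDerivAt_id _)
  have h2 : HasFDerivAt f (fderiv ℝ f q) q := (hf.differentiable (by simp) q).hasFDerivAt
  exact (h2.comp_hasDerivAt q.2 h1).deriv

lemma px_smooth (f : ℝ × ℝ → ℝ) (hf : ContDiff ℝ (⊤ : ℕ∞) f) : ContDiff ℝ (⊤ : ℕ∞) (px f) := by
  rw [px_eq f hf]
  exact (hf.fderiv_right (by simp)).clm_apply contDiff_const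

lemma slice_t (f : ℝ × ℝ → ℝ) (hf : ContDiff ℝ (⊤ : ℕ∞) f) (p : ℝ × ℝ) :
    HasDerivAt (fun s => f (s, p.2)) (pt f p) p.1 := by
  have : DifferentiableAt ℝ (fun s : ℝ => f (s, p.2)) p.1 :=
    (hf.differentiable (by simp) _).comp p.1
      ((differentiableAt_id).prodMk (differentiableAt_const _))
  exact this.hasDerivAt

lemma slice_x (f : ℝ × ℝ → ℝ) (hf : ContDiff ℝ (⊤ : ℕ∞) f) (p : ℝ × ℝ) :
    HasDerivAt (fun s => f (p.1, s)) (px f p) p.2 := by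
  have : DifferentiableAt ℝ (fun s : ℝ => f (p.1, s)) p.2 :=
    (hf.differentiable (by simp) _).comp p.2
      ((differentiableAt_const _).prodMk differentiableAt_id)
  exact this.hasDerivAt

/-- If a smooth `u` solves the short pulse equation everywhere, then
`D_t(√(1 + u_x²)) - D_x((u²/2)√(1 + u_x²)) = 0` holds everywhere. -/
theorem sp_conservation_sqrt (u : ℝ × ℝ → ℝ) (hu : ContDiff ℝ (⊤ : ℕ∞) u)
    (hsp : ∀ p : ℝ × ℝ,
      pt (px u) p - u p - (1 / 2) * u p ^ 2 * px (px u) p - u p * (px u p) ^ 2 = 0) :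
    ∀ p : ℝ × ℝ,
      pt (fun q => Real.sqrt (1 + (px u q) ^ 2)) p
        - px (fun q => (u q ^ 2 / 2) * Real.sqrt (1 + (px u q) ^ 2)) p = 0 := by
  intro p
  set v := px u with hv_def
  have hv : ContDiff ℝ (⊤ : ℕ∞) v := px_smooth u hu
  set a := u p
  set b := v p
  set c := pt v p
  set d := px v p
  have hb2 : (0:ℝ) < 1 + b ^ 2 := by positivity
  set s := Real.sqrt (1 + b ^ 2) with hs_def
  have hs_pos : 0 < s := Real.sqrt_pos.mpr hb2
  have hs2 : s ^ 2 = 1 + b ^ 2 := Real.sq_sqrt hb2.le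
  have hvt : HasDerivAt (fun s => v (s, p.2)) c p.1 := slice_t v hv p
  have h1 : HasDerivAt (fun t => 1 + v (t, p.2) ^ 2) (2 * b * c) p.1 := by
    have := (hvt.pow 2).const_add (1:ℝ)
    simpa [mul_comm, mul_assoc] using this
  have h2 : HasDerivAt (fun t => Real.sqrt (1 + v (t, p.2) ^ 2))
      ((2 * b * c) / (2 * s)) p.1 := h1.sqrt hb2.ne'
  have hpt : pt (fun q => Real.sqrt (1 + (v q) ^ 2)) p = (2 * b * c) / (2 * s) := h2.deriv
  have hux : HasDerivAt (fun x => u (p.1, x)) b p.2 := slice_x u hu p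
  have hvx : HasDerivAt (fun x => v (p.1, x)) d p.2 := slice_x v hv p
  have h3 : HasDerivAt (fun x => u (p.1, x) ^ 2 / 2) (a * b) p.2 := by
    have h := (hux.pow 2).div_const 2
    exact h.congr_deriv (by simp [a]; ring)
  have h4 : HasDerivAt (fun x => Real.sqrt (1 + v (p.1, x) ^ 2))
      ((2 * b * d) / (2 * s)) p.2 := by
    have := (hvx.pow 2).const_add (1:ℝ)
    have h := this.sqrt hb2.ne'
    simpa [mul_comm, mul_assoc] using h
  have h5 : HasDerivAt (fun x => (u (p.1, x) ^ 2 / 2) * Real.sqrt (1 + v (p.1, x) ^ 2))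
      (a * b * s + (a ^ 2 / 2) * ((2 * b * d) / (2 * s))) p.2 := h3.mul h4
  have hpx : px (fun q => (u q ^ 2 / 2) * Real.sqrt (1 + (v q) ^ 2)) p
      = a * b * s + (a ^ 2 / 2) * ((2 * b * d) / (2 * s)) := h5.deriv
  have hsp' : c = a + (1/2) * a ^ 2 * d + a * b ^ 2 := by
    have := hsp p; linarith
  rw [hpt, hpx, hsp']
  field_simp
  linear_combination (-2*a*b) * hs2
end

section
/- First additional conservation law for two-dimensional polytropic gas dynamics with γ = (n+2)/n = 2 (n = 2): let ρ, u, v, p : ℝ³ → ℝ be smooth functions of (t,x,y) satisfying, at every point, the Euler equations ρ_t + (ρu)_x + (ρv)_y = 0, ρ(u_t + u·u_x + v·u_y) + p_x = 0, ρ(v_t + u·v_x + v·v_y) + p_y = 0, p_t + u·p_x + v·p_y + 2·p·(u_x + v_y) = 0. Set T = t·(ρ·(u² + v²) + 2·p) − ρ·(x·u + y·v). Then ∂_t T + ∂_x( T·u + p·(2·t·u − x) ) + ∂_y( T·v + p·(2·t·v − y) ) = 0 at every point of ℝ³. -/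
/-- Partial derivative with respect to the time variable. -/
noncomputable def pt3 (f : ℝ × ℝ × ℝ → ℝ) : ℝ × ℝ × ℝ → ℝ :=
  fun q => deriv (fun s => f (s, q.2.1, q.2.2)) q.1

/-- Partial derivative with respect to the first space variable. -/
noncomputable def px3 (f : ℝ × ℝ × ℝ → ℝ) : ℝ × ℝ × ℝ → ℝ :=
  fun q => deriv (fun s => f (q.1, s, q.2.2)) q.2.1

/-- Partial derivative with respect to the second space variable. -/
noncomputable def py3 (f : ℝ × ℝ × ℝ → ℝ) : ℝ × ℝ × ℝ → ℝ :=
  fun q => deriv (fun s => f (q.1, q.2.1, s)) q.2.2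

lemma lineT (f : ℝ × ℝ × ℝ → ℝ) (hf : ContDiff ℝ (⊤ : ℕ∞) f) (z : ℝ × ℝ × ℝ) :
    HasDerivAt (fun s => f (s, z.2.1, z.2.2)) (pt3 f z) z.1 := by
  have h : DifferentiableAt ℝ (fun s => f (s, z.2.1, z.2.2)) z.1 :=
    ((hf.differentiable (by simp)).comp
      (differentiable_id.prodMk (differentiable_const _))).differentiableAt
  exact h.hasDerivAt

lemma lineX (f : ℝ × ℝ × ℝ → ℝ) (hf : ContDiff ℝ (⊤ : ℕ∞) f) (z : ℝ × ℝ × ℝ) :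
    HasDerivAt (fun s => f (z.1, s, z.2.2)) (px3 f z) z.2.1 := by
  have h : DifferentiableAt ℝ (fun s => f (z.1, s, z.2.2)) z.2.1 :=
    ((hf.differentiable (by simp)).comp
      ((differentiable_const _).prodMk
        (differentiable_id.prodMk (differentiable_const _)))).differentiableAt
  exact h.hasDerivAt

lemma lineY (f : ℝ × ℝ × ℝ → ℝ) (hf : ContDiff ℝ (⊤ : ℕ∞) f) (z : ℝ × ℝ × ℝ) :
    HasDerivAt (fun s => f (z.1, z.2.1, s)) (py3 f z) z.2.2 := by
  have h : DifferentiableAt ℝ (fun s => f (z.1, z.2.1, s)) z.2.2 :=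
    ((hf.differentiable (by simp)).comp
      ((differentiable_const _).prodMk
        ((differentiable_const _).prodMk differentiable_id))).differentiableAt
  exact h.hasDerivAt

/-- First additional conservation law for 2D polytropic gas dynamics with `γ = 2`. -/
theorem euler2d_additional_first (ρ u v P : ℝ × ℝ × ℝ → ℝ)
    (hρ : ContDiff ℝ (⊤ : ℕ∞) ρ) (hu : ContDiff ℝ (⊤ : ℕ∞) u) (hv : ContDiff ℝ (⊤ : ℕ∞) v)
    (hP : ContDiff ℝ (⊤ : ℕ∞) P)
    (h₁ : ∀ z : ℝ × ℝ × ℝ,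
      pt3 ρ z + px3 (fun q => ρ q * u q) z + py3 (fun q => ρ q * v q) z = 0)
    (h₂ : ∀ z : ℝ × ℝ × ℝ,
      ρ z * (pt3 u z + u z * px3 u z + v z * py3 u z) + px3 P z = 0)
    (h₃ : ∀ z : ℝ × ℝ × ℝ,
      ρ z * (pt3 v z + u z * px3 v z + v z * py3 v z) + py3 P z = 0)
    (h₄ : ∀ z : ℝ × ℝ × ℝ,
      pt3 P z + u z * px3 P z + v z * py3 P z + 2 * P z * (px3 u z + py3 v z) = 0)
    (T : ℝ × ℝ × ℝ → ℝ)
    (hT : T = fun q => q.1 * (ρ q * (u q ^ 2 + v q ^ 2) + 2 * P q)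
        - ρ q * (q.2.1 * u q + q.2.2 * v q)) :
    ∀ z : ℝ × ℝ × ℝ,
      pt3 T z
        + px3 (fun q => T q * u q + P q * (2 * q.1 * u q - q.2.1)) z
        + py3 (fun q => T q * v q + P q * (2 * q.1 * v q - q.2.2)) z = 0 := by
  subst hT
  rintro ⟨t, x, y⟩
  have Rt := lineT ρ hρ (t, x, y)
  have Ut := lineT u hu (t, x, y)
  have Vt := lineT v hv (t, x, y)
  have Qt := lineT P hP (t, x, y)
  have Rx := lineX ρ hρ (t, x, y)
  have Ux := lineX u hu (t, x, y)
  have Vx := lineX v hv (t, x, y)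
  have Qx := lineX P hP (t, x, y)
  have Ry := lineY ρ hρ (t, x, y)
  have Uy := lineY u hu (t, x, y)
  have Vy := lineY v hv (t, x, y)
  have Qy := lineY P hP (t, x, y)
  have e1 : pt3 (fun q => q.1 * (ρ q * (u q ^ 2 + v q ^ 2) + 2 * P q)
      - ρ q * (q.2.1 * u q + q.2.2 * v q)) (t, x, y) = _ :=
    (((hasDerivAt_id t).mul ((Rt.mul ((Ut.pow 2).add (Vt.pow 2))).add
        (Qt.const_mul 2))).sub
      (Rt.mul ((Ut.const_mul x).add (Vt.const_mul y)))).deriv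
  have e2 : px3 (fun q => (q.1 * (ρ q * (u q ^ 2 + v q ^ 2) + 2 * P q)
      - ρ q * (q.2.1 * u q + q.2.2 * v q)) * u q
      + P q * (2 * q.1 * u q - q.2.1)) (t, x, y) = _ :=
    (((((((Rx.mul ((Ux.pow 2).add (Vx.pow 2))).add
          (Qx.const_mul 2)).const_mul t).sub
        (Rx.mul (((hasDerivAt_id x).mul Ux).add (Vx.const_mul y)))).mul Ux)).add
      (Qx.mul ((Ux.const_mul (2 * t)).sub (hasDerivAt_id x)))).deriv
  have e3 : py3 (fun q => (q.1 * (ρ q * (u q ^ 2 + v q ^ 2) + 2 * P q)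
      - ρ q * (q.2.1 * u q + q.2.2 * v q)) * v q
      + P q * (2 * q.1 * v q - q.2.2)) (t, x, y) = _ :=
    (((((((Ry.mul ((Uy.pow 2).add (Vy.pow 2))).add
          (Qy.const_mul 2)).const_mul t).sub
        (Ry.mul ((Uy.const_mul x).add ((hasDerivAt_id y).mul Vy)))).mul Vy)).add
      (Qy.mul ((Vy.const_mul (2 * t)).sub (hasDerivAt_id y)))).deriv
  have e4 : px3 (fun q => ρ q * u q) (t, x, y) = _ := (Rx.mul Ux).deriv
  have e5 : py3 (fun q => ρ q * v q) (t, x, y) = _ := (Ry.mul Vy).deriv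
  have h1 := h₁ (t, x, y)
  rw [e4, e5] at h1
  norm_num [id_eq] at e1 e2 e3 h1
  beta_reduce
  linear_combination e1 + e2 + e3
    + (t * (u (t, x, y) ^ 2 + v (t, x, y) ^ 2)
        - (x * u (t, x, y) + y * v (t, x, y))) * h1
    + (2 * t * u (t, x, y) - x) * h₂ (t, x, y)
    + (2 * t * v (t, x, y) - y) * h₃ (t, x, y)
    + (2 * t) * h₄ (t, x, y)
end

section
/- Second additional conservation law for two-dimensional polytropic gas dynamics with γ = (n+2)/n = 2 (n = 2): let ρ, u, v, p : ℝ³ → ℝ be smooth functions of (t,x,y) satisfying, at every point, the Euler equations ρ_t + (ρu)_x + (ρv)_y = 0, ρ(u_t + u·u_x + v·u_y) + p_x = 0, ρ(v_t + u·v_x + v·v_y) + p_y = 0, p_t + u·p_x + v·p_y + 2·p·(u_x + v_y) = 0. Set S = t²·(ρ·(u² + v²) + 2·p) − 2·t·ρ·(x·u + y·v) + ρ·(x² + y²). Then ∂_t S + ∂_x( S·u + 2·t·p·(t·u − x) ) + ∂_y( S·v + 2·t·p·(t·v − y) ) = 0 at every point of ℝ³. -/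
/-- Second additional conservation law for 2D polytropic gas dynamics with `γ = 2`. -/
theorem euler2d_additional_second (ρ u v P : ℝ × ℝ × ℝ → ℝ)
    (hρ : ContDiff ℝ (⊤ : ℕ∞) ρ) (hu : ContDiff ℝ (⊤ : ℕ∞) u) (hv : ContDiff ℝ (⊤ : ℕ∞) v)
    (hP : ContDiff ℝ (⊤ : ℕ∞) P)
    (h₁ : ∀ z : ℝ × ℝ × ℝ,
      pt3 ρ z + px3 (fun q => ρ q * u q) z + py3 (fun q => ρ q * v q) z = 0)
    (h₂ : ∀ z : ℝ × ℝ × ℝ,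
      ρ z * (pt3 u z + u z * px3 u z + v z * py3 u z) + px3 P z = 0)
    (h₃ : ∀ z : ℝ × ℝ × ℝ,
      ρ z * (pt3 v z + u z * px3 v z + v z * py3 v z) + py3 P z = 0)
    (h₄ : ∀ z : ℝ × ℝ × ℝ,
      pt3 P z + u z * px3 P z + v z * py3 P z + 2 * P z * (px3 u z + py3 v z) = 0)
    (S : ℝ × ℝ × ℝ → ℝ)
    (hS : S = fun q => q.1 ^ 2 * (ρ q * (u q ^ 2 + v q ^ 2) + 2 * P q)
        - 2 * q.1 * ρ q * (q.2.1 * u q + q.2.2 * v q) + ρ q * (q.2.1 ^ 2 + q.2.2 ^ 2)) :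
    ∀ z : ℝ × ℝ × ℝ,
      pt3 S z
        + px3 (fun q => S q * u q + 2 * q.1 * P q * (q.1 * u q - q.2.1)) z
        + py3 (fun q => S q * v q + 2 * q.1 * P q * (q.1 * v q - q.2.2)) z = 0 := by
  have hρ' : Differentiable ℝ ρ := hρ.differentiable (by simp)
  have hu' : Differentiable ℝ u := hu.differentiable (by simp)
  have hv' : Differentiable ℝ v := hv.differentiable (by simp)
  have hP' : Differentiable ℝ P := hP.differentiable (by simp)
  rintro ⟨t, x, y⟩
  have e₁ := h₁ (t, x, y)
  have e₂ := h₂ (t, x, y)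
  have e₃ := h₃ (t, x, y)
  have e₄ := h₄ (t, x, y)
  subst hS
  simp only [pt3, px3, py3] at e₁ e₂ e₃ e₄ ⊢
  simp (disch := fun_prop) only [deriv_fun_mul, deriv_fun_add, deriv_fun_sub, deriv_fun_pow,
    deriv_const', deriv_id'', differentiableAt_fun_id, differentiableAt_const,
    deriv_add_const', deriv_const_add', deriv_const_mul_field'] at e₁ e₂ e₃ e₄ ⊢
  have h2 : deriv (HMul.hMul (2:ℝ)) = fun _ => (2:ℝ) := by
    funext s
    rw [show HMul.hMul (2:ℝ) = fun y => 2 * y from rfl, deriv_const_mul_field']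
    simp
  simp only [h2]
  linear_combination
    (t ^ 2 * (u (t, x, y) ^ 2 + v (t, x, y) ^ 2)
        - 2 * t * (x * u (t, x, y) + y * v (t, x, y)) + x ^ 2 + y ^ 2) * e₁
    + (2 * t * (t * u (t, x, y) - x)) * e₂
    + (2 * t * (t * v (t, x, y) - y)) * e₃
    + 2 * t ^ 2 * e₄
end
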